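/- In the algebra ([0,1], min, max, ∼, →_FT) with ∼x = 1 - x and x →_FT y = max(1-x, y) if x ≤ y, else 0, the Δ operator is definable as Δ(x) = 1 →_FT x, i.e. for all x ∈ [0,1], 1 →_FT x = 1 if x = 1 and 1 →_FT x = 0 otherwise; moreover, Gödel implication is definable as x ⇒_G y = max(∼Δ(∼(x →_FT y)), y). -/

import Mathlib

/-! For `x ≤ y` the value `x →_FT y = max (1 - x) y` is positive, so `Δ (∼(x →_FT y)) = 0` and the
right-hand side is `max 1 y = 1`; for `x > y` it is `0`, so `Δ (∼0) = 1` and the right-hand side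
is `max 0 y = y`. -/

noncomputable def Gimp (x y : ℝ) : ℝ := if x ≤ y then 1 else y

noncomputable def delta (x : ℝ) : ℝ := if x = 1 then 1 else 0

noncomputable def FTimp (x y : ℝ) : ℝ := if x ≤ y then max (1 - x) y else 0

theorem delta_one : delta 1 = 1 := if_pos rfl

theorem delta_of_ne_one {x : ℝ} (hx : x ≠ 1) : delta x = 0 := if_neg hx

theorem FTimp_of_lt {x y : ℝ} (h : y < x) : FTimp x y = 0 := if_neg h.not_ge

theorem FTimp_pos {x y : ℝ} (h : x ≤ y) : 0 < FTimp x y := by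
  rw [FTimp, if_pos h]
  rcases lt_or_ge x 1 with hx | hx
  · exact lt_max_of_lt_left (by linarith)
  · exact lt_max_of_lt_right (by linarith)

theorem FTimp_one_left {x : ℝ} (hx : x ≤ 1) : FTimp 1 x = delta x := by
  rcases hx.eq_or_lt with rfl | hlt
  · simp [FTimp, delta_one]
  · rw [FTimp_of_lt hlt, delta_of_ne_one hlt.ne]

theorem delta_and_godel_from_ft :
    (∀ x ∈ Set.Icc (0:ℝ) 1, FTimp 1 x = delta x) ∧
    (∀ x ∈ Set.Icc (0:ℝ) 1, ∀ y ∈ Set.Icc (0:ℝ) 1,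
      Gimp x y = max (1 - delta (1 - FTimp x y)) y) := by
  refine ⟨fun x hx => FTimp_one_left hx.2, ?_⟩
  rintro x - y ⟨hy0, hy1⟩
  rcases le_or_gt x y with h | h
  · have hne : 1 - FTimp x y ≠ 1 := by linarith [FTimp_pos h]
    rw [Gimp, if_pos h, delta_of_ne_one hne, sub_zero, max_eq_left hy1]
  · rw [Gimp, if_neg h.not_ge, FTimp_of_lt h, sub_zero, delta_one, sub_self, max_eq_right hy0]
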